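/- Suppose h is increasing with h(0) = 0, satisfies stability, and (h,h°) satisfies CDP on R = [0,c]. Then eu(H*(R,w)) = h°(0) − h°(c), where w₀ = h + h° − h°(0). In particular, by Lemma of the alternating sum, Σ_{□_q ⊆ R} (−1)^{q+1} w(□_q) = h°(0) − h°(c). -/

import Mathlib

open scoped Classical

def eI (s : ℕ) (I : Finset (Fin s)) : Fin s → ℤ := fun v => if v ∈ I then 1 else 0

def cubeW (s : ℕ) (w : (Fin s → ℤ) → ℤ) (l : Fin s → ℤ) (I : Finset (Fin s)) : ℤ :=
  I.powerset.sup' ⟨∅, Finset.empty_mem_powerset I⟩ (fun I' => w (l + eI s I'))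

noncomputable def cubeSum (s : ℕ) (c : Fin s → ℤ) (w : (Fin s → ℤ) → ℤ) : ℤ :=
  ∑ l ∈ Finset.Icc (0 : Fin s → ℤ) c,
    ∑ I ∈ (Finset.univ : Finset (Fin s)).powerset,
      if l + eI s I ≤ c then (-1 : ℤ) ^ (I.card + 1) * cubeW s w l I else 0

noncomputable def chiComb (s : ℕ) (c : Fin s → ℤ) (w : (Fin s → ℤ) → ℤ) (n : ℤ) : ℤ :=
  ∑ l ∈ Finset.Icc (0 : Fin s → ℤ) c,
    ∑ I ∈ (Finset.univ : Finset (Fin s)).powerset,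
      if l + eI s I ≤ c ∧ cubeW s w l I ≤ n then (-1 : ℤ) ^ I.card else 0

lemma eI_nonneg (s : ℕ) (I : Finset (Fin s)) : 0 ≤ eI s I := by
  intro v; simp only [eI, Pi.zero_apply]; split <;> norm_num

lemma eI_mono (s : ℕ) {I J : Finset (Fin s)} (hIJ : I ⊆ J) : eI s I ≤ eI s J := by
  intro v; simp only [eI]
  by_cases hv : v ∈ I
  · simp [hv, hIJ hv]
  · simp only [hv, if_false]; split <;> norm_num

lemma eI_empty (s : ℕ) : eI s ∅ = 0 := by
  funext v; simp [eI]

lemma eI_insert (s : ℕ) {I : Finset (Fin s)} {u : Fin s} (hu : u ∉ I) :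
    eI s (insert u I) = eI s I + Pi.single u 1 := by
  funext v
  simp only [eI, Finset.mem_insert, Pi.add_apply, Pi.single_apply]
  by_cases hv : v ∈ I
  · have : v ≠ u := fun h => hu (h ▸ hv)
    simp [hv, this]
  · by_cases hvu : v = u <;> simp [hv, hvu, hu]

lemma single_le_eI (s : ℕ) {I : Finset (Fin s)} {u : Fin s} (hu : u ∈ I) :
    Pi.single u 1 ≤ eI s I := by
  intro v
  rw [Pi.single_apply]
  simp only [eI]
  by_cases hv : v = u
  · simp [hv, hu]
  · simp only [hv, if_false]; split <;> norm_num

/-- multi-step monotonicity -/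
lemma mono_of_step {s : ℕ} (c : Fin s → ℤ) (f : (Fin s → ℤ) → ℤ)
    (hf : ∀ l v, 0 ≤ l → l + Pi.single v 1 ≤ c → f l ≤ f (l + Pi.single v 1)) :
    ∀ (n : ℕ) (a b : Fin s → ℤ), (∑ v, (b v - a v)).toNat = n → 0 ≤ a → a ≤ b → b ≤ c →
      f a ≤ f b := by
  intro n
  induction n with
  | zero =>
    intro a b hn ha hab hbc
    have : a = b := by
      funext v
      have h1 : ∀ u, 0 ≤ b u - a u := fun u => by linarith [hab u]
      have hnn : (0:ℤ) ≤ ∑ u, (b u - a u) := Finset.sum_nonneg (fun u _ => h1 u)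
      have hsum : (∑ u, (b u - a u)) = 0 := by omega
      have := (Finset.sum_eq_zero_iff_of_nonneg (fun u _ => h1 u)).mp hsum v (Finset.mem_univ v)
      linarith
    rw [this]
  | succ n ih =>
    intro a b hn ha hab hbc
    have h1 : ∀ u, 0 ≤ b u - a u := fun u => by linarith [hab u]
    have hex : ∃ v, a v < b v := by
      by_contra hcon
      push_neg at hcon
      have : ∀ v, b v - a v = 0 := fun v => by have := hab v; have := hcon v; linarith
      have : (∑ v, (b v - a v)) = 0 := Finset.sum_eq_zero (fun v _ => this v)
      omega
    obtain ⟨v, hv⟩ := hex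
    set a' := a + Pi.single v 1 with ha'
    have haa' : a ≤ a' := by
      intro u; simp only [ha', Pi.add_apply, Pi.single_apply]; split <;> simp
    have ha'b : a' ≤ b := by
      intro u
      simp only [ha', Pi.add_apply, Pi.single_apply]
      by_cases huv : u = v
      · simp [huv]; omega
      · simp [huv]; exact hab u
    have ha'0 : 0 ≤ a' := le_trans ha haa'
    have ha'c : a' ≤ c := le_trans ha'b hbc
    have step : f a ≤ f a' := hf a v ha ha'c
    have hsum' : (∑ u, (b u - a' u)).toNat = n := by
      have heq : (∑ u, (b u - a' u)) = (∑ u, (b u - a u)) - 1 := by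
        have hpt : ∀ u, b u - a' u = (b u - a u) - (Pi.single v (1:ℤ) : Fin s → ℤ) u := by
          intro u; simp only [ha', Pi.add_apply]; ring
        calc (∑ u, (b u - a' u))
            = ∑ u, ((b u - a u) - (Pi.single v (1:ℤ) : Fin s → ℤ) u) :=
              Finset.sum_congr rfl (fun u _ => hpt u)
          _ = (∑ u, (b u - a u)) - ∑ u, (Pi.single v (1:ℤ) : Fin s → ℤ) u :=
              Finset.sum_sub_distrib _ _
          _ = (∑ u, (b u - a u)) - 1 := by
              rw [Finset.sum_pi_single']; simp
      have hge : 1 ≤ (∑ u, (b u - a u)) := by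
        calc (1:ℤ) ≤ b v - a v := by omega
        _ ≤ ∑ u, (b u - a u) := Finset.single_le_sum (fun u _ => h1 u) (Finset.mem_univ v)
      omega
    exact le_trans step (ih a' b hsum' ha'0 ha'b hbc)

section Part2
variable {s : ℕ} {c : Fin s → ℤ} {h h0 : (Fin s → ℤ) → ℤ}

lemma flat_box
    (hstab : ∀ (l lbar : Fin s → ℤ) (v : Fin s), 0 ≤ l → 0 ≤ lbar → lbar v = 0 →
      l + Pi.single v 1 ≤ c → l + lbar + Pi.single v 1 ≤ c →
      h l = h (l + Pi.single v 1) →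
      h (l + lbar) = h (l + lbar + Pi.single v 1)) :
    ∀ (I : Finset (Fin s)) (l : Fin s → ℤ), 0 ≤ l → l + eI s I ≤ c →
      (∀ u ∈ I, h l = h (l + Pi.single u 1)) → h (l + eI s I) = h l := by
  intro I
  induction I using Finset.induction_on with
  | empty => intro l _ _ _; rw [eI_empty]; simp
  | @insert u I hu ih =>
    intro l hl hltop hflat
    have htop' : l + eI s I + Pi.single u 1 ≤ c := by
      rw [eI_insert s hu] at hltop
      calc l + eI s I + Pi.single u 1 = l + (eI s I + Pi.single u 1) := by ring
        _ ≤ c := hltop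
    have hIle : l + eI s I ≤ c := by
      refine le_trans ?_ htop'
      intro v; simp only [Pi.add_apply, Pi.single_apply]; split <;> simp
    have hu1 : l + Pi.single u 1 ≤ c := by
      refine le_trans ?_ htop'
      intro v
      simp only [Pi.add_apply]
      have h2 := eI_nonneg s I v
      simp only [Pi.zero_apply] at h2
      linarith
    have h1 : h (l + eI s I) = h l :=
      ih l hl hIle (fun v hv => hflat v (Finset.mem_insert_of_mem hv))
    have h2 : h (l + eI s I) = h (l + eI s I + Pi.single u 1) :=
      hstab l (eI s I) u hl (eI_nonneg s I) (by simp [eI, hu]) hu1 htop'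
        (hflat u (Finset.mem_insert_self u I))
    rw [eI_insert s hu, show l + (eI s I + Pi.single u 1) = l + eI s I + Pi.single u 1 by ring,
      ← h2, h1]

lemma attain
    (hmono : ∀ (l : Fin s → ℤ) (v : Fin s), 0 ≤ l → l + Pi.single v 1 ≤ c →
      h l ≤ h (l + Pi.single v 1))
    (hdec : ∀ (l : Fin s → ℤ) (v : Fin s), 0 ≤ l → l + Pi.single v 1 ≤ c →
      h0 (l + Pi.single v 1) ≤ h0 l)
    (hstab : ∀ (l lbar : Fin s → ℤ) (v : Fin s), 0 ≤ l → 0 ≤ lbar → lbar v = 0 →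
      l + Pi.single v 1 ≤ c → l + lbar + Pi.single v 1 ≤ c →
      h l = h (l + Pi.single v 1) →
      h (l + lbar) = h (l + lbar + Pi.single v 1))
    (hCDP : ∀ (l : Fin s → ℤ) (v : Fin s), 0 ≤ l → l + Pi.single v 1 ≤ c →
      ¬(h l < h (l + Pi.single v 1) ∧ h0 (l + Pi.single v 1) < h0 l)) :
    ∀ (n : ℕ) (I : Finset (Fin s)) (l : Fin s → ℤ), I.card = n → 0 ≤ l → l + eI s I ≤ c →
      ∃ I' ∈ I.powerset, h (l + eI s I') + h0 (l + eI s I') = h (l + eI s I) + h0 l := by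
  intro n
  induction n with
  | zero =>
    intro I l hcard hl htop
    have : I = ∅ := Finset.card_eq_zero.mp hcard
    subst this
    exact ⟨∅, Finset.empty_mem_powerset _, by rw [eI_empty]; simp⟩
  | succ n ih =>
    intro I l hcard hl htop
    by_cases hex : ∃ u ∈ I, h l < h (l + Pi.single u 1)
    · obtain ⟨u, hu, hlt⟩ := hex
      have hsingle_le : l + Pi.single u 1 ≤ c := by
        refine le_trans ?_ htop
        intro v; simp only [Pi.add_apply]
        have h1 := single_le_eI s hu v
        linarith
      have hh0 : h0 (l + Pi.single u 1) = h0 l := by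
        have hle := hdec l u hl hsingle_le
        have hncdp := hCDP l u hl hsingle_le
        push_neg at hncdp
        have := hncdp hlt
        omega
      set l' := l + Pi.single u 1 with hl'
      have hl'0 : 0 ≤ l' := by
        refine le_trans hl ?_
        intro v; simp only [hl', Pi.add_apply, Pi.single_apply]; split <;> simp
      have heIerase : eI s I = eI s (I.erase u) + Pi.single u 1 := by
        rw [← eI_insert s (Finset.notMem_erase u I), Finset.insert_erase hu]
      have htop' : l' + eI s (I.erase u) ≤ c := by
        calc l' + eI s (I.erase u) = l + eI s I := by rw [heIerase, hl']; ring
          _ ≤ c := htop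
      have hcard' : (I.erase u).card = n := by
        rw [Finset.card_erase_of_mem hu, hcard]; rfl
      obtain ⟨I'', hI''mem, hI''⟩ := ih (I.erase u) l' hcard' hl'0 htop'
      rw [Finset.mem_powerset] at hI''mem
      have huI'' : u ∉ I'' := fun hmem => (Finset.notMem_erase u I) (hI''mem hmem)
      refine ⟨insert u I'', Finset.mem_powerset.mpr ?_, ?_⟩
      · intro v hv
        rcases Finset.mem_insert.mp hv with hv | hv
        · exact hv ▸ hu
        · exact Finset.mem_of_mem_erase (hI''mem hv)
      · have hpt : l + eI s (insert u I'') = l' + eI s I'' := by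
          rw [eI_insert s huI'', hl']; ring
        rw [hpt, hI'']
        have hpt2 : l' + eI s (I.erase u) = l + eI s I := by
          rw [heIerase, hl']; ring
        rw [hpt2, hh0]
    · push_neg at hex
      have hflat : ∀ u ∈ I, h l = h (l + Pi.single u 1) := by
        intro u hu
        have hsingle_le : l + Pi.single u 1 ≤ c := by
          refine le_trans ?_ htop
          intro v; simp only [Pi.add_apply]
          have h1 := single_le_eI s hu v
          linarith
        have := hmono l u hl hsingle_le
        have := hex u hu
        omega
      refine ⟨∅, Finset.empty_mem_powerset _, ?_⟩
      rw [eI_empty, flat_box hstab I l hl htop hflat]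
      simp

end Part2

section Part3
variable {s : ℕ} {c : Fin s → ℤ} {h h0 : (Fin s → ℤ) → ℤ}

lemma h_le (hmono : ∀ (l : Fin s → ℤ) (v : Fin s), 0 ≤ l → l + Pi.single v 1 ≤ c →
      h l ≤ h (l + Pi.single v 1)) :
    ∀ a b : Fin s → ℤ, 0 ≤ a → a ≤ b → b ≤ c → h a ≤ h b :=
  fun a b => mono_of_step c h hmono _ a b rfl

lemma h0_ge (hdec : ∀ (l : Fin s → ℤ) (v : Fin s), 0 ≤ l → l + Pi.single v 1 ≤ c →
      h0 (l + Pi.single v 1) ≤ h0 l) :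
    ∀ a b : Fin s → ℤ, 0 ≤ a → a ≤ b → b ≤ c → h0 b ≤ h0 a := by
  intro a b ha hab hbc
  have := mono_of_step c (fun x => -(h0 x))
    (fun l v hl hlc => by simpa using hdec l v hl hlc) _ a b rfl ha hab hbc
  simpa using this

lemma cubeW_eq
    (hmono : ∀ (l : Fin s → ℤ) (v : Fin s), 0 ≤ l → l + Pi.single v 1 ≤ c →
      h l ≤ h (l + Pi.single v 1))
    (hdec : ∀ (l : Fin s → ℤ) (v : Fin s), 0 ≤ l → l + Pi.single v 1 ≤ c →
      h0 (l + Pi.single v 1) ≤ h0 l)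
    (hstab : ∀ (l lbar : Fin s → ℤ) (v : Fin s), 0 ≤ l → 0 ≤ lbar → lbar v = 0 →
      l + Pi.single v 1 ≤ c → l + lbar + Pi.single v 1 ≤ c →
      h l = h (l + Pi.single v 1) →
      h (l + lbar) = h (l + lbar + Pi.single v 1))
    (hCDP : ∀ (l : Fin s → ℤ) (v : Fin s), 0 ≤ l → l + Pi.single v 1 ≤ c →
      ¬(h l < h (l + Pi.single v 1) ∧ h0 (l + Pi.single v 1) < h0 l))
    (w : (Fin s → ℤ) → ℤ) (hw : ∀ l, w l = h l + h0 l - h0 0)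
    (l : Fin s → ℤ) (I : Finset (Fin s)) (hl : 0 ≤ l) (htop : l + eI s I ≤ c) :
    cubeW s w l I = h (l + eI s I) + h0 l - h0 0 := by
  apply le_antisymm
  · apply Finset.sup'_le
    intro I' hI'
    rw [Finset.mem_powerset] at hI'
    rw [hw]
    have hle1 : l + eI s I' ≤ l + eI s I := by
      intro v; simp only [Pi.add_apply]
      have := eI_mono s hI' v
      linarith
    have h0le : 0 ≤ l + eI s I' := by
      intro v; simp only [Pi.add_apply]
      have h1 := hl v
      have h2 := eI_nonneg s I' v
      simp only [Pi.zero_apply] at h1 h2 ⊢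
      linarith
    have hha : h (l + eI s I') ≤ h (l + eI s I) :=
      h_le hmono _ _ h0le hle1 htop
    have hh0a : h0 (l + eI s I') ≤ h0 l :=
      h0_ge hdec l (l + eI s I') hl
        (by intro v; simp only [Pi.add_apply]
            have h2 := eI_nonneg s I' v
            simp only [Pi.zero_apply] at h2
            linarith)
        (le_trans hle1 htop)
    linarith
  · obtain ⟨I', hI'mem, hI'⟩ := attain hmono hdec hstab hCDP I.card I l rfl hl htop
    have := Finset.le_sup' (fun I' => w (l + eI s I')) hI'mem
    rw [hw] at this
    have heq : h (l + eI s I') + h0 (l + eI s I') - h0 0 = h (l + eI s I) + h0 l - h0 0 := by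
      rw [hI']
    rw [heq] at this
    exact this

end Part3

section Part4
variable {s : ℕ}

lemma eI_le_iff_subset {c : Fin s → ℤ} (l : Fin s → ℤ) (hl : l ∈ Finset.Icc (0 : Fin s → ℤ) c)
    (I : Finset (Fin s)) :
    l + eI s I ≤ c ↔ I ⊆ Finset.univ.filter (fun v => l v + 1 ≤ c v) := by
  rw [Finset.mem_Icc] at hl
  constructor
  · intro hle v hv
    have := hle v
    simp only [Pi.add_apply, eI, hv, if_true] at this
    simp only [Finset.mem_filter, Finset.mem_univ, true_and]
    linarith
  · intro hsub v
    by_cases hv : v ∈ I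
    · have := hsub hv
      simp only [Finset.mem_filter, Finset.mem_univ, true_and] at this
      simp only [Pi.add_apply, eI, hv, if_true]
      linarith
    · simp only [Pi.add_apply, eI, hv, if_false]
      have := hl.2 v
      linarith

lemma inner_sign (A : Finset (Fin s)) (x : ℤ) :
    ∑ I ∈ (Finset.univ : Finset (Fin s)).powerset, (if I ⊆ A then (-1:ℤ)^(I.card+1) * x else 0)
      = if A = ∅ then -x else 0 := by
  rw [← Finset.sum_filter]
  have hfil : (Finset.univ : Finset (Fin s)).powerset.filter (fun I => I ⊆ A) = A.powerset := by
    ext I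
    simp [Finset.mem_powerset, Finset.mem_filter]
  rw [hfil]
  have : ∀ I : Finset (Fin s), (-1:ℤ)^(I.card+1) * x = (-1:ℤ)^I.card * (-x) := by
    intro I; ring
  rw [Finset.sum_congr rfl (fun I _ => this I), ← Finset.sum_mul,
    Finset.sum_powerset_neg_one_pow_card]
  split <;> ring

lemma sumB {c : Fin s → ℤ} (hc : 0 ≤ c) (g : (Fin s → ℤ) → ℤ) :
    ∑ l ∈ Finset.Icc (0 : Fin s → ℤ) c,
      ∑ I ∈ (Finset.univ : Finset (Fin s)).powerset,
        (if l + eI s I ≤ c then (-1:ℤ)^(I.card+1) * g l else 0) = -(g c) := by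
  have hstep : ∀ l ∈ Finset.Icc (0 : Fin s → ℤ) c,
      ∑ I ∈ (Finset.univ : Finset (Fin s)).powerset,
        (if l + eI s I ≤ c then (-1:ℤ)^(I.card+1) * g l else 0)
      = if l = c then -(g l) else 0 := by
    intro l hl
    have h1 : ∀ I : Finset (Fin s),
        (if l + eI s I ≤ c then (-1:ℤ)^(I.card+1) * g l else 0)
        = (if I ⊆ Finset.univ.filter (fun v => l v + 1 ≤ c v) then (-1:ℤ)^(I.card+1) * g l else 0) := by
      intro I
      by_cases hcond : l + eI s I ≤ c
      · rw [if_pos hcond, if_pos ((eI_le_iff_subset l hl I).mp hcond)]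
      · rw [if_neg hcond, if_neg (fun hc' => hcond ((eI_le_iff_subset l hl I).mpr hc'))]
    rw [Finset.sum_congr rfl (fun I _ => h1 I), inner_sign]
    rw [Finset.mem_Icc] at hl
    have hiff : (Finset.univ.filter (fun v => l v + 1 ≤ c v) = ∅) ↔ l = c := by
      rw [Finset.filter_eq_empty_iff]
      constructor
      · intro hall
        funext v
        have h2 := hall (Finset.mem_univ v)
        have h3 : l v ≤ c v := hl.2 v
        omega
      · intro hlc v _
        rw [hlc]; omega
    by_cases hlc : l = c
    · rw [if_pos (hiff.mpr hlc), if_pos hlc]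
    · rw [if_neg (fun he => hlc (hiff.mp he)), if_neg hlc]
  rw [Finset.sum_congr rfl hstep, Finset.sum_ite_eq' (Finset.Icc (0 : Fin s → ℤ) c) c (fun l => -(g l)),
    if_pos (Finset.mem_Icc.mpr ⟨hc, le_refl c⟩)]

end Part4

section Part5
variable {s : ℕ}

lemma eI_le_iff_subset' (m : Fin s → ℤ) (hm : (0 : Fin s → ℤ) ≤ m) (I : Finset (Fin s)) :
    eI s I ≤ m ↔ I ⊆ Finset.univ.filter (fun v => 1 ≤ m v) := by
  constructor
  · intro hle v hv
    have := hle v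
    simp only [eI, hv, if_true] at this
    simp only [Finset.mem_filter, Finset.mem_univ, true_and]
    exact this
  · intro hsub v
    by_cases hv : v ∈ I
    · have := hsub hv
      simp only [Finset.mem_filter, Finset.mem_univ, true_and] at this
      simpa only [eI, hv, if_true] using this
    · simp only [eI, hv, if_false]
      exact hm v

lemma sumA {c : Fin s → ℤ} (hc : (0 : Fin s → ℤ) ≤ c) (f : (Fin s → ℤ) → ℤ) :
    ∑ l ∈ Finset.Icc (0 : Fin s → ℤ) c,
      ∑ I ∈ (Finset.univ : Finset (Fin s)).powerset,
        (if l + eI s I ≤ c then (-1:ℤ)^(I.card+1) * f (l + eI s I) else 0) = -(f 0) := by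
  rw [Finset.sum_comm]
  have hIstep : ∀ I ∈ (Finset.univ : Finset (Fin s)).powerset,
      ∑ l ∈ Finset.Icc (0 : Fin s → ℤ) c,
        (if l + eI s I ≤ c then (-1:ℤ)^(I.card+1) * f (l + eI s I) else 0)
      = ∑ m ∈ Finset.Icc (0 : Fin s → ℤ) c,
        (if eI s I ≤ m then (-1:ℤ)^(I.card+1) * f m else 0) := by
    intro I _
    set e := eI s I with he
    have he0 : (0 : Fin s → ℤ) ≤ e := eI_nonneg s I
    have hfil1 : (Finset.Icc (0 : Fin s → ℤ) c).filter (fun l => l + e ≤ c)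
        = Finset.Icc (0 : Fin s → ℤ) (c - e) := by
      ext l
      simp only [Finset.mem_filter, Finset.mem_Icc]
      constructor
      · rintro ⟨⟨h0l, _⟩, hlec⟩
        refine ⟨h0l, fun v => ?_⟩
        have := hlec v
        simp only [Pi.add_apply] at this
        simp only [Pi.sub_apply]
        linarith
      · rintro ⟨h0l, hlce⟩
        have hlc : l ≤ c := by
          intro v
          have h1 : l v ≤ c v - e v := hlce v
          have h2 : (0:ℤ) ≤ e v := he0 v
          linarith
        refine ⟨⟨h0l, hlc⟩, fun v => ?_⟩
        have h1 : l v ≤ c v - e v := hlce v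
        simp only [Pi.add_apply]
        linarith
    have hmap : Finset.Icc e c = Finset.map (addLeftEmbedding e) (Finset.Icc (0 : Fin s → ℤ) (c - e)) := by
      rw [Finset.map_add_left_Icc]
      congr 1 <;> abel
    have hfil2 : Finset.Icc e c = (Finset.Icc (0 : Fin s → ℤ) c).filter (fun m => e ≤ m) := by
      ext m
      simp only [Finset.mem_filter, Finset.mem_Icc]
      constructor
      · rintro ⟨hem, hmc⟩
        exact ⟨⟨le_trans he0 hem, hmc⟩, hem⟩
      · rintro ⟨⟨_, hmc⟩, hem⟩
        exact ⟨hem, hmc⟩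
    calc ∑ l ∈ Finset.Icc (0 : Fin s → ℤ) c,
          (if l + e ≤ c then (-1:ℤ)^(I.card+1) * f (l + e) else 0)
        = ∑ l ∈ (Finset.Icc (0 : Fin s → ℤ) c).filter (fun l => l + e ≤ c),
            (-1:ℤ)^(I.card+1) * f (l + e) := (Finset.sum_filter _ _).symm
      _ = ∑ l ∈ Finset.Icc (0 : Fin s → ℤ) (c - e), (-1:ℤ)^(I.card+1) * f (l + e) := by
            rw [hfil1]
      _ = ∑ m ∈ Finset.Icc e c, (-1:ℤ)^(I.card+1) * f m := by
            rw [hmap, Finset.sum_map]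
            apply Finset.sum_congr rfl
            intro l _
            simp only [addLeftEmbedding_apply]
            rw [add_comm e l]
      _ = ∑ m ∈ (Finset.Icc (0 : Fin s → ℤ) c).filter (fun m => e ≤ m),
            (-1:ℤ)^(I.card+1) * f m := by rw [← hfil2]
      _ = ∑ m ∈ Finset.Icc (0 : Fin s → ℤ) c, (if e ≤ m then (-1:ℤ)^(I.card+1) * f m else 0) :=
            Finset.sum_filter _ _
  rw [Finset.sum_congr rfl hIstep, Finset.sum_comm]
  have hmstep : ∀ m ∈ Finset.Icc (0 : Fin s → ℤ) c,
      ∑ I ∈ (Finset.univ : Finset (Fin s)).powerset,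
        (if eI s I ≤ m then (-1:ℤ)^(I.card+1) * f m else 0)
      = if m = 0 then -(f m) else 0 := by
    intro l hl
    rw [Finset.mem_Icc] at hl
    have h1 : ∀ I : Finset (Fin s),
        (if eI s I ≤ l then (-1:ℤ)^(I.card+1) * f l else 0)
        = (if I ⊆ Finset.univ.filter (fun v => 1 ≤ l v) then (-1:ℤ)^(I.card+1) * f l else 0) := by
      intro I
      by_cases hcond : eI s I ≤ l
      · rw [if_pos hcond, if_pos ((eI_le_iff_subset' l hl.1 I).mp hcond)]
      · rw [if_neg hcond, if_neg (fun hc' => hcond ((eI_le_iff_subset' l hl.1 I).mpr hc'))]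
    rw [Finset.sum_congr rfl (fun I _ => h1 I), inner_sign]
    have hiff : (Finset.univ.filter (fun v => 1 ≤ l v) = ∅) ↔ l = 0 := by
      rw [Finset.filter_eq_empty_iff]
      constructor
      · intro hall
        funext v
        have h2 := hall (Finset.mem_univ v)
        have h3 : (0:ℤ) ≤ l v := hl.1 v
        simp only [Pi.zero_apply]
        omega
      · intro hl0 v _
        rw [hl0]; simp
    by_cases hl0 : l = 0
    · rw [if_pos (hiff.mpr hl0), if_pos hl0]
    · rw [if_neg (fun he => hl0 (hiff.mp he)), if_neg hl0]
  rw [Finset.sum_congr rfl hmstep,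
    Finset.sum_ite_eq' (Finset.Icc (0 : Fin s → ℤ) c) 0 (fun m => -(f m)),
    if_pos (Finset.mem_Icc.mpr ⟨le_refl _, hc⟩)]

end Part5

/-- under stability and CDP, the Euler characteristic of the
lattice cohomology of the rectangle equals `h°(0) − h°(c)`; in particular the
alternating weighted cube sum equals `h°(0) − h°(c)`. -/
theorem eu_lattice_cohomology (s : ℕ) (c : Fin s → ℤ) (hc : 0 ≤ c)
    (h h0 : (Fin s → ℤ) → ℤ)
    (hzero : h 0 = 0)
    (hmono : ∀ (l : Fin s → ℤ) (v : Fin s), 0 ≤ l → l + Pi.single v 1 ≤ c →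
      h l ≤ h (l + Pi.single v 1))
    (hdec : ∀ (l : Fin s → ℤ) (v : Fin s), 0 ≤ l → l + Pi.single v 1 ≤ c →
      h0 (l + Pi.single v 1) ≤ h0 l)
    (hstab : ∀ (l lbar : Fin s → ℤ) (v : Fin s), 0 ≤ l → 0 ≤ lbar → lbar v = 0 →
      l + Pi.single v 1 ≤ c → l + lbar + Pi.single v 1 ≤ c →
      h l = h (l + Pi.single v 1) →
      h (l + lbar) = h (l + lbar + Pi.single v 1))
    (hCDP : ∀ (l : Fin s → ℤ) (v : Fin s), 0 ≤ l → l + Pi.single v 1 ≤ c →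
      ¬(h l < h (l + Pi.single v 1) ∧ h0 (l + Pi.single v 1) < h0 l))
    (w : (Fin s → ℤ) → ℤ)
    (hw : ∀ l, w l = h l + h0 l - h0 0)
    (m M : ℤ)
    (hm : IsLeast {z : ℤ | ∃ l : Fin s → ℤ, 0 ≤ l ∧ l ≤ c ∧ z = w l} m)
    (hM : ∀ l : Fin s → ℤ, 0 ≤ l → l ≤ c → w l ≤ M) :
    (-m + ∑ n ∈ Finset.Icc m M, (chiComb s c w n - 1) = h0 0 - h0 c)
    ∧ cubeSum s c w = h0 0 - h0 c := by
  -- Part 2: cubeSum = h0 0 - h0 c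
  have key2 : cubeSum s c w = h0 0 - h0 c := by
    have hsplit : ∀ l ∈ Finset.Icc (0 : Fin s → ℤ) c,
        ∀ I ∈ (Finset.univ : Finset (Fin s)).powerset,
        (if l + eI s I ≤ c then (-1:ℤ)^(I.card+1) * cubeW s w l I else 0)
        = (if l + eI s I ≤ c then (-1:ℤ)^(I.card+1) * h (l + eI s I) else 0)
          + (if l + eI s I ≤ c then (-1:ℤ)^(I.card+1) * ((fun x => h0 x - h0 0) l) else 0) := by
      intro l hl I _
      rw [Finset.mem_Icc] at hl
      by_cases hcond : l + eI s I ≤ c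
      · rw [if_pos hcond, if_pos hcond, if_pos hcond,
          cubeW_eq hmono hdec hstab hCDP w hw l I hl.1 hcond]
        ring
      · simp [hcond]
    have hcs : cubeSum s c w
        = (∑ l ∈ Finset.Icc (0 : Fin s → ℤ) c,
            ∑ I ∈ (Finset.univ : Finset (Fin s)).powerset,
              (if l + eI s I ≤ c then (-1:ℤ)^(I.card+1) * h (l + eI s I) else 0))
          + (∑ l ∈ Finset.Icc (0 : Fin s → ℤ) c,
            ∑ I ∈ (Finset.univ : Finset (Fin s)).powerset,
              (if l + eI s I ≤ c then (-1:ℤ)^(I.card+1) * ((fun x => h0 x - h0 0) l) else 0)) := by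
      rw [cubeSum, Finset.sum_congr rfl
        (fun l hl => Finset.sum_congr rfl (fun I hI => hsplit l hl I hI))]
      simp only [Finset.sum_add_distrib]
    rw [hcs, sumA hc h, sumB hc (fun x => h0 x - h0 0), hzero]
    ring
  refine ⟨?_, key2⟩
  -- ∑∑ (-1)^I.card over admissible cubes equals 1
  have hN : ∑ l ∈ Finset.Icc (0 : Fin s → ℤ) c,
      ∑ I ∈ (Finset.univ : Finset (Fin s)).powerset,
        (if l + eI s I ≤ c then (-1:ℤ)^I.card else 0) = 1 := by
    have hB := sumB (s := s) hc (fun _ => (-1:ℤ))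
    have hrw : ∀ l : Fin s → ℤ, ∀ I : Finset (Fin s),
        (if l + eI s I ≤ c then (-1:ℤ)^(I.card+1) * ((fun _ => (-1:ℤ)) l) else 0)
        = (if l + eI s I ≤ c then (-1:ℤ)^I.card else 0) := by
      intro l I
      by_cases hcond : l + eI s I ≤ c
      · rw [if_pos hcond, if_pos hcond, pow_succ]; ring
      · simp [hcond]
    rw [Finset.sum_congr rfl (fun l _ => Finset.sum_congr rfl (fun I _ => hrw l I))] at hB
    rw [hB]; ring
  -- m ≤ M
  obtain ⟨l₀, hl₀0, hl₀c, hml₀⟩ := hm.1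
  have hmM : m ≤ M := hml₀ ▸ hM l₀ hl₀0 hl₀c
  -- sum of chiComb
  have hchi : ∑ n ∈ Finset.Icc m M, chiComb s c w n = (M + 1) + cubeSum s c w := by
    have h1 : ∑ n ∈ Finset.Icc m M, chiComb s c w n
        = ∑ l ∈ Finset.Icc (0 : Fin s → ℤ) c,
            ∑ I ∈ (Finset.univ : Finset (Fin s)).powerset,
              ∑ n ∈ Finset.Icc m M,
                (if l + eI s I ≤ c ∧ cubeW s w l I ≤ n then (-1:ℤ)^I.card else 0) := by
      simp only [chiComb]
      rw [Finset.sum_comm]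
      exact Finset.sum_congr rfl (fun l _ => Finset.sum_comm)
    rw [h1]
    have h2 : ∀ l ∈ Finset.Icc (0 : Fin s → ℤ) c,
        ∀ I ∈ (Finset.univ : Finset (Fin s)).powerset,
        ∑ n ∈ Finset.Icc m M,
            (if l + eI s I ≤ c ∧ cubeW s w l I ≤ n then (-1:ℤ)^I.card else 0)
        = (if l + eI s I ≤ c then ((M + 1) * (-1:ℤ)^I.card + (-1:ℤ)^(I.card+1) * cubeW s w l I) else 0) := by
      intro l hl I _
      rw [Finset.mem_Icc] at hl
      by_cases hcond : l + eI s I ≤ c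
      · set W := cubeW s w l I with hW
        have hWub : W ≤ M := by
          apply Finset.sup'_le
          intro I' hI'
          rw [Finset.mem_powerset] at hI'
          have hnn : 0 ≤ l + eI s I' := by
            intro v
            have h1 : (0:ℤ) ≤ l v := hl.1 v
            have h2 := eI_nonneg s I' v
            simp only [Pi.zero_apply] at h2 ⊢
            simp only [Pi.add_apply]
            linarith
          have hle : l + eI s I' ≤ c := by
            refine le_trans ?_ hcond
            intro v
            have := eI_mono s hI' v
            simp only [Pi.add_apply]
            linarith
          exact hM _ hnn hle
        have hWlb : m ≤ W := by
          have hwl : m ≤ w l := hm.2 ⟨l, hl.1, hl.2, rfl⟩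
          have : w (l + eI s ∅) ≤ W := by
            rw [hW, cubeW]
            exact Finset.le_sup' (fun I' => w (l + eI s I')) (Finset.empty_mem_powerset I)
          rw [eI_empty, add_zero] at this
          linarith
        have hcount : ∀ n, (if l + eI s I ≤ c ∧ W ≤ n then (-1:ℤ)^I.card else 0)
            = (if W ≤ n then (-1:ℤ)^I.card else 0) := by
          intro n
          by_cases hn : W ≤ n
          · rw [if_pos ⟨hcond, hn⟩, if_pos hn]
          · rw [if_neg (fun hh => hn hh.2), if_neg hn]
        rw [Finset.sum_congr rfl (fun n _ => hcount n), ← Finset.sum_filter]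
        have hfil : (Finset.Icc m M).filter (fun n => W ≤ n) = Finset.Icc W M := by
          ext n
          simp only [Finset.mem_filter, Finset.mem_Icc]
          constructor
          · rintro ⟨⟨_, hnM⟩, hWn⟩; exact ⟨hWn, hnM⟩
          · rintro ⟨hWn, hnM⟩; exact ⟨⟨le_trans hWlb hWn, hnM⟩, hWn⟩
        rw [hfil, Finset.sum_const, Int.card_Icc, if_pos hcond]
        have : ((M + 1 - W).toNat : ℤ) = M + 1 - W := Int.toNat_of_nonneg (by omega)
        rw [nsmul_eq_mul, this, pow_succ]
        ring
      · rw [if_neg hcond]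
        apply Finset.sum_eq_zero
        intro n _
        rw [if_neg (fun hh => hcond hh.1)]
    rw [Finset.sum_congr rfl (fun l hl => Finset.sum_congr rfl (fun I hI => h2 l hl I hI))]
    have h3 : ∀ l : Fin s → ℤ, ∀ I : Finset (Fin s),
        (if l + eI s I ≤ c then ((M + 1) * (-1:ℤ)^I.card + (-1:ℤ)^(I.card+1) * cubeW s w l I) else 0)
        = (M + 1) * (if l + eI s I ≤ c then (-1:ℤ)^I.card else 0)
          + (if l + eI s I ≤ c then (-1:ℤ)^(I.card+1) * cubeW s w l I else 0) := by
      intro l I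
      by_cases hcond : l + eI s I ≤ c <;> simp [hcond]
    rw [Finset.sum_congr rfl (fun l _ => Finset.sum_congr rfl (fun I _ => h3 l I))]
    simp only [Finset.sum_add_distrib, ← Finset.mul_sum]
    rw [hN, ← cubeSum]
    ring
  -- final computation
  have hcard : ((Finset.Icc m M).card : ℤ) = M + 1 - m := by
    rw [Int.card_Icc]
    exact Int.toNat_of_nonneg (by omega)
  rw [Finset.sum_sub_distrib, hchi, Finset.sum_const, key2]
  rw [nsmul_eq_mul, mul_one, hcard]
  ring
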